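/- arXiv:2103.13727 — 4 statements merged into one kernel-verified Lean document; each statement's English description precedes it below -/
import Mathlib

section
/- Let f : [0, π] → ℝ be positive and strictly decreasing. Then ∫_0^π f(θ)^4 sin θ cos θ dθ > 0. -/
open Real

/-- If `f` is positive and strictly decreasing on `[0,π]`, then
`∫_0^π f(θ)^4 sin θ cos θ dθ > 0`. -/
theorem meridian_integral_pos (f : ℝ → ℝ)
    (hpos : ∀ θ ∈ Set.Icc (0:ℝ) π, 0 < f θ)
    (hanti : StrictAntiOn f (Set.Icc 0 π)) :
    0 < ∫ θ in (0:ℝ)..π, f θ ^ 4 * Real.sin θ * Real.cos θ := by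
  set h : ℝ → ℝ := fun θ => f θ ^ 4 * Real.sin θ * Real.cos θ with hh
  have hpi : (0:ℝ) < π := Real.pi_pos
  have hhalf : (0:ℝ) ≤ π / 2 := by linarith
  have hhalf2 : π / 2 ≤ π := by linarith
  -- f^4 is antitone on [0,π]
  have hg_anti : AntitoneOn (fun θ => f θ ^ 4) (Set.Icc 0 π) := by
    intro x hx y hy hxy
    rcases eq_or_lt_of_le hxy with rfl | hlt
    · exact le_rfl
    · exact le_of_lt (pow_lt_pow_left₀ (hanti hx hy hlt) (le_of_lt (hpos y hy)) (by norm_num))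
  have hg_int : IntervalIntegrable (fun θ => f θ ^ 4) MeasureTheory.volume 0 π := by
    apply AntitoneOn.intervalIntegrable
    rwa [Set.uIcc_of_le (le_of_lt hpi)]
  have hInt : IntervalIntegrable h MeasureTheory.volume 0 π := by
    have : ContinuousOn (fun θ => Real.sin θ * Real.cos θ) (Set.uIcc (0:ℝ) π) :=
      (Real.continuous_sin.mul Real.continuous_cos).continuousOn
    have := hg_int.mul_continuousOn this
    simpa [hh, mul_assoc] using this
  have hInt1 : IntervalIntegrable h MeasureTheory.volume 0 (π/2) := by
    apply hInt.mono_set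
    rw [Set.uIcc_of_le hhalf, Set.uIcc_of_le (le_of_lt hpi)]
    exact Set.Icc_subset_Icc le_rfl hhalf2
  have hInt2 : IntervalIntegrable h MeasureTheory.volume (π/2) π := by
    apply hInt.mono_set
    rw [Set.uIcc_of_le hhalf2, Set.uIcc_of_le (le_of_lt hpi)]
    exact Set.Icc_subset_Icc hhalf le_rfl
  have hInt3 : IntervalIntegrable (fun x => h (π - x)) MeasureTheory.volume 0 (π/2) := by
    have := (hInt2.comp_sub_left π).symm
    have h1 : π - π/2 = π/2 := by ring
    simpa [h1] using this
  have hsplit : (∫ θ in (0:ℝ)..π, h θ)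
      = (∫ θ in (0:ℝ)..(π/2), h θ) + ∫ θ in (π/2)..π, h θ :=
    (intervalIntegral.integral_add_adjacent_intervals hInt1 hInt2).symm
  have hrefl : (∫ θ in (π/2)..π, h θ) = ∫ θ in (0:ℝ)..(π/2), h (π - θ) := by
    rw [intervalIntegral.integral_comp_sub_left h π]
    have h1 : π - π/2 = π/2 := by ring
    rw [h1, sub_zero]
  have hsum : (∫ θ in (0:ℝ)..(π/2), h θ) + (∫ θ in (0:ℝ)..(π/2), h (π - θ))
      = ∫ θ in (0:ℝ)..(π/2), (h θ + h (π - θ)) :=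
    (intervalIntegral.integral_add hInt1 hInt3).symm
  rw [hsplit, hrefl, hsum]
  apply intervalIntegral.intervalIntegral_pos_of_pos_on (hInt1.add hInt3)
  · intro x hx
    obtain ⟨hx0, hx2⟩ := hx
    have hsin : 0 < Real.sin x := Real.sin_pos_of_pos_of_lt_pi hx0 (by linarith)
    have hcos : 0 < Real.cos x := Real.cos_pos_of_mem_Ioo ⟨by linarith, hx2⟩
    have hxm : x ∈ Set.Icc (0:ℝ) π := ⟨le_of_lt hx0, by linarith⟩
    have hym : (π - x) ∈ Set.Icc (0:ℝ) π := ⟨by linarith, by linarith⟩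
    have hflt : f (π - x) < f x := hanti hxm hym (by linarith)
    have hpow : f (π - x) ^ 4 < f x ^ 4 :=
      pow_lt_pow_left₀ hflt (le_of_lt (hpos _ hym)) (by norm_num)
    have hval : h x + h (π - x) = (f x ^ 4 - f (π - x) ^ 4) * (Real.sin x * Real.cos x) := by
      simp only [hh, Real.sin_pi_sub, Real.cos_pi_sub]
      ring
    rw [hval]
    exact mul_pos (by linarith) (mul_pos hsin hcos)
  · linarith
end

section
/- Define z_C(α) = (1 + k·S_n(α))/(1 + kn) where S_n(α) = ∑_{i=1}^n (∏_{j=1}^i cos α_j)·cos(∑_{j=1}^i α_j). For n = 4, k = 5 and α = (66.173°, 44.519°, 29.875°, 19.716°) (i.e., α_1 = 66.173°, α_2 = 44.519°, α_3 = 29.875°, α_4 = 19.716°), with the correction term S*_n(α) = S_n(α) + (1/k)·sin²α_1·tan²(π/k), the value z*_C(α) = (1 + k·S*_n(α))/(1+kn) is negative. -/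
open Real Finset

lemma nonneg_of_deriv (f f' : ℝ → ℝ) (hf : ∀ y, HasDerivAt f (f' y) y)
    (h0 : f 0 = 0) (hf' : ∀ y, 0 ≤ y → 0 ≤ f' y) {x : ℝ} (hx : 0 ≤ x) : 0 ≤ f x := by
  have hm : MonotoneOn f (Set.Ici 0) := by
    apply monotoneOn_of_deriv_nonneg (convex_Ici 0)
    · exact fun y _ => (hf y).differentiableAt.continuousAt.continuousWithinAt
    · exact fun y _ => (hf y).differentiableAt.differentiableWithinAt
    · intro y hy
      rw [(hf y).deriv]
      exact hf' y (le_of_lt (by simpa using hy))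
  have := hm (Set.self_mem_Ici) (Set.mem_Ici.2 hx) hx
  simpa [h0] using this

lemma sin_ge_cubic {x : ℝ} (hx : 0 ≤ x) : x - x ^ 3 / 6 ≤ Real.sin x := by
  have h := nonneg_of_deriv (fun t => Real.sin t - (t - t ^ 3 / 6))
      (fun y => Real.cos y - (1 - y ^ 2 / 2))
      (fun y => by
        have h1 := (Real.hasDerivAt_sin y).sub
          ((hasDerivAt_id y).sub ((hasDerivAt_pow 3 y).div_const 6))
        exact h1.congr_deriv (by simp; ring))
      (by simp)
      (fun y _ => by linarith [Real.one_sub_sq_div_two_le_cos (x := y)]) hx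
  linarith [h]

lemma cos_le_quartic {x : ℝ} (hx : 0 ≤ x) : Real.cos x ≤ 1 - x ^ 2 / 2 + x ^ 4 / 24 := by
  have h := nonneg_of_deriv (fun t => 1 - t ^ 2 / 2 + t ^ 4 / 24 - Real.cos t)
      (fun y => -(y) + y ^ 3 / 6 + Real.sin y)
      (fun y => by
        have h1 := ((((hasDerivAt_const y (1:ℝ)).sub ((hasDerivAt_pow 2 y).div_const 2)).add
          ((hasDerivAt_pow 4 y).div_const 24)).sub (Real.hasDerivAt_cos y))
        exact h1.congr_deriv (by simp; ring))
      (by simp)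
      (fun y hy => by linarith [sin_ge_cubic hy]) hx
  linarith [h]

lemma sin_le_quintic {x : ℝ} (hx : 0 ≤ x) : Real.sin x ≤ x - x ^ 3 / 6 + x ^ 5 / 120 := by
  have h := nonneg_of_deriv (fun t => t - t ^ 3 / 6 + t ^ 5 / 120 - Real.sin t)
      (fun y => 1 - y ^ 2 / 2 + y ^ 4 / 24 - Real.cos y)
      (fun y => by
        have h1 := ((((hasDerivAt_id y).sub ((hasDerivAt_pow 3 y).div_const 6)).add
          ((hasDerivAt_pow 5 y).div_const 120)).sub (Real.hasDerivAt_sin y))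
        exact h1.congr_deriv (by simp; ring))
      (by simp)
      (fun y hy => by linarith [cos_le_quartic hy]) hx
  linarith [h]

lemma cos_ge_sextic {x : ℝ} (hx : 0 ≤ x) :
    1 - x ^ 2 / 2 + x ^ 4 / 24 - x ^ 6 / 720 ≤ Real.cos x := by
  have h := nonneg_of_deriv
      (fun t => Real.cos t - (1 - t ^ 2 / 2 + t ^ 4 / 24 - t ^ 6 / 720))
      (fun y => -Real.sin y - (-(y) + y ^ 3 / 6 - y ^ 5 / 120))
      (fun y => by
        have h1 := (Real.hasDerivAt_cos y).sub
          ((((hasDerivAt_const y (1:ℝ)).sub ((hasDerivAt_pow 2 y).div_const 2)).add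
            ((hasDerivAt_pow 4 y).div_const 24)).sub ((hasDerivAt_pow 6 y).div_const 720))
        exact h1.congr_deriv (by simp; ring))
      (by simp)
      (fun y hy => by linarith [sin_le_quintic hy]) hx
  linarith [h]

/-- Lower bound for `cos (q * π / 180)` for `0 ≤ q`, from rational bounds on `π`. -/
lemma cos_deg_lb (q L : ℝ) (hq : 0 ≤ q)
    (h : L ≤ 1 - (q * 3.141593 / 180) ^ 2 / 2 + (q * 3.141592 / 180) ^ 4 / 24
        - (q * 3.141593 / 180) ^ 6 / 720) :
    L ≤ Real.cos (q * π / 180) := by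
  have hπl := Real.pi_gt_d6
  have hπu := Real.pi_lt_d6
  set x := q * π / 180 with hx
  have hlo : q * 3.141592 / 180 ≤ x := by rw [hx]; nlinarith
  have hhi : x ≤ q * 3.141593 / 180 := by rw [hx]; nlinarith
  have h0 : (0:ℝ) ≤ q * 3.141592 / 180 := by positivity
  have hx0 : 0 ≤ x := h0.trans hlo
  have e2 : x ^ 2 ≤ (q * 3.141593 / 180) ^ 2 := pow_le_pow_left₀ hx0 hhi 2
  have e4 : (q * 3.141592 / 180) ^ 4 ≤ x ^ 4 := pow_le_pow_left₀ h0 hlo 4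
  have e6 : x ^ 6 ≤ (q * 3.141593 / 180) ^ 6 := pow_le_pow_left₀ hx0 hhi 6
  have := cos_ge_sextic hx0
  linarith

/-- Upper bound for `cos (q * π / 180)` for `0 ≤ q`, from rational bounds on `π`. -/
lemma cos_deg_ub (q U : ℝ) (hq : 0 ≤ q)
    (h : 1 - (q * 3.141592 / 180) ^ 2 / 2 + (q * 3.141593 / 180) ^ 4 / 24 ≤ U) :
    Real.cos (q * π / 180) ≤ U := by
  have hπl := Real.pi_gt_d6
  have hπu := Real.pi_lt_d6
  set x := q * π / 180 with hx
  have hlo : q * 3.141592 / 180 ≤ x := by rw [hx]; nlinarith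
  have hhi : x ≤ q * 3.141593 / 180 := by rw [hx]; nlinarith
  have h0 : (0:ℝ) ≤ q * 3.141592 / 180 := by positivity
  have hx0 : 0 ≤ x := h0.trans hlo
  have e2 : (q * 3.141592 / 180) ^ 2 ≤ x ^ 2 := pow_le_pow_left₀ h0 hlo 2
  have e4 : x ^ 4 ≤ (q * 3.141593 / 180) ^ 4 := pow_le_pow_left₀ hx0 hhi 4
  have := cos_le_quartic hx0
  linarith

lemma tan_pi_div_five_sq_le : Real.tan (π / 5) ^ 2 ≤ 0.528 := by
  have hc := Real.cos_pi_div_five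
  have hs5 : (2.236 : ℝ) ≤ Real.sqrt 5 := by
    nlinarith [Real.sq_sqrt (show (0:ℝ) ≤ 5 by norm_num), Real.sqrt_nonneg 5]
  have hcl : (0.809 : ℝ) ≤ Real.cos (π / 5) := by rw [hc]; nlinarith
  have hcu := Real.cos_le_one (π / 5)
  have hcpos : (0:ℝ) < Real.cos (π / 5) := by linarith
  have hsin : Real.sin (π / 5) ^ 2 = 1 - Real.cos (π / 5) ^ 2 := Real.sin_sq (π / 5)
  rw [Real.tan_eq_sin_div_cos, div_pow, hsin, div_le_iff₀ (by positivity)]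
  nlinarith

set_option maxHeartbeats 1000000 in
/-- For `n = 4`, `k = 5` and the angles of Table 1, line 3 (in degrees), the corrected
center-of-mass height `z*_C(α) = (1 + k·S*_n(α)) / (1 + k n)` is negative. -/
theorem gomboc21_center_of_mass_neg :
    let α : ℕ → ℝ := fun i =>
      if i = 1 then 66.173 * π / 180
      else if i = 2 then 44.519 * π / 180
      else if i = 3 then 29.875 * π / 180
      else if i = 4 then 19.716 * π / 180
      else 0
    let S : ℝ := ∑ i ∈ Finset.Icc 1 4,
      (∏ j ∈ Finset.Icc 1 i, Real.cos (α j)) * Real.cos (∑ j ∈ Finset.Icc 1 i, α j)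
    let Sstar : ℝ := S + (1 / 5) * Real.sin (α 1) ^ 2 * Real.tan (π / 5) ^ 2
    (1 + 5 * Sstar) / (1 + 5 * 4) < 0 := by
  intro α S Sstar
  apply div_neg_of_neg_of_pos ?_ (by norm_num)
  have e1 : (Finset.Icc 1 1 : Finset ℕ) = {1} := rfl
  have e2 : (Finset.Icc 1 2 : Finset ℕ) = {1,2} := rfl
  have e3 : (Finset.Icc 1 3 : Finset ℕ) = {1,2,3} := rfl
  have e4 : (Finset.Icc 1 4 : Finset ℕ) = {1,2,3,4} := rfl
  simp only [Sstar, S, α]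
  norm_num [e1, e2, e3, e4, Finset.sum_insert, Finset.mem_insert, Finset.prod_insert,
    Finset.sum_singleton, Finset.prod_singleton]
  -- rewrite the obtuse angles as π - (acute angle)
  rw [show (66173 / 1000 : ℝ) * π / 180 + 44519 / 1000 * π / 180
      = π - 69308 / 1000 * π / 180 by ring,
    show (66173 / 1000 : ℝ) * π / 180 + (44519 / 1000 * π / 180 + 239 / 8 * π / 180)
      = π - 39433 / 1000 * π / 180 by ring,
    show (66173 / 1000 : ℝ) * π / 180 +
        (44519 / 1000 * π / 180 + (239 / 8 * π / 180 + 4929 / 250 * π / 180))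
      = π - 19717 / 1000 * π / 180 by ring,
    Real.cos_pi_sub, Real.cos_pi_sub, Real.cos_pi_sub]
  have hsin : Real.sin ((66173 / 1000 : ℝ) * π / 180) ^ 2
      = 1 - Real.cos ((66173 / 1000 : ℝ) * π / 180) ^ 2 := Real.sin_sq _
  rw [hsin]
  set c1 := Real.cos ((66173 / 1000 : ℝ) * π / 180) with hc1
  set c2 := Real.cos ((44519 / 1000 : ℝ) * π / 180) with hc2
  set c3 := Real.cos ((239 / 8 : ℝ) * π / 180) with hc3
  set c4 := Real.cos ((4929 / 250 : ℝ) * π / 180) with hc4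
  set d2 := Real.cos ((69308 / 1000 : ℝ) * π / 180) with hd2
  set d3 := Real.cos ((39433 / 1000 : ℝ) * π / 180) with hd3
  set d4 := Real.cos ((19717 / 1000 : ℝ) * π / 180) with hd4
  have hc1l : (0.4038:ℝ) ≤ c1 := cos_deg_lb _ _ (by norm_num) (by norm_num)
  have hc1u : c1 ≤ (0.4072:ℝ) := cos_deg_ub _ _ (by norm_num) (by norm_num)
  have hc2l : (0.7130:ℝ) ≤ c2 := cos_deg_lb _ _ (by norm_num) (by norm_num)
  have hc3l : (0.8671:ℝ) ≤ c3 := cos_deg_lb _ _ (by norm_num) (by norm_num)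
  have hc4l : (0.9413:ℝ) ≤ c4 := cos_deg_lb _ _ (by norm_num) (by norm_num)
  have hd2l : (0.3532:ℝ) ≤ d2 := cos_deg_lb _ _ (by norm_num) (by norm_num)
  have hd3l : (0.7723:ℝ) ≤ d3 := cos_deg_lb _ _ (by norm_num) (by norm_num)
  have hd4l : (0.9413:ℝ) ≤ d4 := cos_deg_lb _ _ (by norm_num) (by norm_num)
  have htu := tan_pi_div_five_sq_le
  have htl : (0:ℝ) ≤ Real.tan (π / 5) ^ 2 := sq_nonneg _
  have hc1pos : (0:ℝ) ≤ c1 := by linarith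
  -- partial product bounds
  have p2 : (0.4038:ℝ) * 0.7130 ≤ c1 * c2 :=
    mul_le_mul hc1l hc2l (by norm_num) hc1pos
  have hp2pos : (0:ℝ) ≤ c1 * c2 := by linarith
  have p3 : (0.4038:ℝ) * 0.7130 * 0.8671 ≤ c1 * c2 * c3 :=
    mul_le_mul p2 hc3l (by norm_num) hp2pos
  have hp3pos : (0:ℝ) ≤ c1 * c2 * c3 := by linarith
  have p4 : (0.4038:ℝ) * 0.7130 * 0.8671 * 0.9413 ≤ c1 * c2 * c3 * c4 :=
    mul_le_mul p3 hc4l (by norm_num) hp3pos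
  -- term bounds
  have t1 : c1 * c1 ≤ (0.4072:ℝ) * 0.4072 := mul_le_mul hc1u hc1u hc1pos (by norm_num)
  have q2 : (0.4038:ℝ) * 0.7130 * 0.3532 ≤ c1 * c2 * d2 :=
    mul_le_mul p2 hd2l (by norm_num) hp2pos
  have q3 : (0.4038:ℝ) * 0.7130 * 0.8671 * 0.7723 ≤ c1 * c2 * c3 * d3 :=
    mul_le_mul p3 hd3l (by norm_num) hp3pos
  have q4 : (0.4038:ℝ) * 0.7130 * 0.8671 * 0.9413 * 0.9413 ≤ c1 * c2 * c3 * c4 * d4 :=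
    mul_le_mul p4 hd4l (by norm_num) (by linarith)
  have hs1 : 1 - c1 ^ 2 ≤ 1 - (0.4038:ℝ) ^ 2 := by nlinarith [hc1l, hc1pos]
  have hs1pos : (0:ℝ) ≤ 1 - c1 ^ 2 := by nlinarith [hc1u, hc1pos]
  have ts : (1 - c1 ^ 2) * Real.tan (π / 5) ^ 2 ≤ (1 - (0.4038:ℝ) ^ 2) * 0.528 :=
    mul_le_mul hs1 htu htl (by norm_num)
  nlinarith [t1, q2, q3, q4, ts]
end

section
/- Define z_C(α) = (1 + 2·∑_{i=1}^5 (∏_{j=1}^i cos α_j)·cos(∑_{j=1}^i α_j))/11. For α = (62.427°, 42.172°, 29.110°, 19.890°, 13.201°) (α_1 = 62.427°, ..., α_5 = 13.201°, angles in degrees), we have z_C(α) < 0. -/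
open Real Finset

private lemma cos_base {t tl tu : ℝ} (h1 : 0 ≤ tl) (h2 : tl ≤ t) (h3 : t ≤ tu) (h4 : tu ≤ 1) :
    1 - tu^2/2 - 5/96*tu^4 ≤ Real.cos t ∧ Real.cos t ≤ 1 - tl^2/2 + 5/96*tu^4 := by
  have ht0 : 0 ≤ t := h1.trans h2
  have ht : |t| ≤ 1 := by rw [abs_le]; constructor <;> nlinarith
  have h := Real.cos_bound ht
  rw [abs_le, abs_of_nonneg ht0] at h
  have h2' : t^2 ≤ tu^2 := by nlinarith
  have h4' : t^4 ≤ tu^4 := by nlinarith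
  have h2'' : tl^2 ≤ t^2 := by nlinarith
  constructor <;> nlinarith

private lemma cos_double {x : ℝ} (a b : ℝ) (h0 : 0 ≤ a) (ha : a ≤ Real.cos x) (hb : Real.cos x ≤ b) :
    2*a^2 - 1 ≤ Real.cos (2*x) ∧ Real.cos (2*x) ≤ 2*b^2 - 1 := by
  have h := Real.cos_two_mul x
  constructor <;> nlinarith

private lemma cos_a1 : (0.4560929:ℝ) ≤ Real.cos (62.427 * π / 180) ∧ Real.cos (62.427 * π / 180) ≤ 0.4636435 := by
  have e : (62.427:ℝ) * π / 180 = 2*(2*(62.427 * π / 720)) := by ring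
  have h0 : ((0.9626153:ℝ) ≤ Real.cos (62.427 * π / 720) ∧ Real.cos (62.427 * π / 720) ≤ 0.9631889) := by
    have hb := cos_base (t := 62.427 * π / 720) (tl := 62.427 * 3.141592 / 720) (tu := 62.427 * 3.141593 / 720) (by norm_num) (by nlinarith [Real.pi_gt_d6]) (by nlinarith [Real.pi_lt_d6]) (by norm_num)
    exact ⟨le_trans (by norm_num) hb.1, le_trans hb.2 (by norm_num)⟩
  have g0 := cos_double 0.9626153 _ (by norm_num) h0.1 h0.2
  have h1 : ((0.8532564:ℝ) ≤ Real.cos (2*(62.427 * π / 720)) ∧ Real.cos (2*(62.427 * π / 720)) ≤ 0.8554658) := ⟨le_trans (by norm_num) g0.1, le_trans g0.2 (by norm_num)⟩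
  have g1 := cos_double 0.8532564 _ (by norm_num) h1.1 h1.2
  have h2 : ((0.4560929:ℝ) ≤ Real.cos (2*(2*(62.427 * π / 720))) ∧ Real.cos (2*(2*(62.427 * π / 720))) ≤ 0.4636435) := ⟨le_trans (by norm_num) g1.1, le_trans g1.2 (by norm_num)⟩
  rw [e]; exact h2

private lemma cos_a2 : (0.7395556:ℝ) ≤ Real.cos (42.172 * π / 180) ∧ Real.cos (42.172 * π / 180) ≤ 0.7413098 := by
  have e : (42.172:ℝ) * π / 180 = 2*(2*(42.172 * π / 720)) := by ring
  have h0 : ((0.9830104:ℝ) ≤ Real.cos (42.172 * π / 720) ∧ Real.cos (42.172 * π / 720) ≤ 0.9831299) := by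
    have hb := cos_base (t := 42.172 * π / 720) (tl := 42.172 * 3.141592 / 720) (tu := 42.172 * 3.141593 / 720) (by norm_num) (by nlinarith [Real.pi_gt_d6]) (by nlinarith [Real.pi_lt_d6]) (by norm_num)
    exact ⟨le_trans (by norm_num) hb.1, le_trans hb.2 (by norm_num)⟩
  have g0 := cos_double 0.9830104 _ (by norm_num) h0.1 h0.2
  have h1 : ((0.9326188:ℝ) ≤ Real.cos (2*(42.172 * π / 720)) ∧ Real.cos (2*(42.172 * π / 720)) ≤ 0.9330889) := ⟨le_trans (by norm_num) g0.1, le_trans g0.2 (by norm_num)⟩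
  have g1 := cos_double 0.9326188 _ (by norm_num) h1.1 h1.2
  have h2 : ((0.7395556:ℝ) ≤ Real.cos (2*(2*(42.172 * π / 720))) ∧ Real.cos (2*(2*(42.172 * π / 720))) ≤ 0.7413098) := ⟨le_trans (by norm_num) g1.1, le_trans g1.2 (by norm_num)⟩
  rw [e]; exact h2

private lemma cos_a3 : (0.8733112:ℝ) ≤ Real.cos (29.110 * π / 180) ∧ Real.cos (29.110 * π / 180) ≤ 0.8737298 := by
  have e : (29.110:ℝ) * π / 180 = 2*(2*(29.110 * π / 720)) := by ring
  have h0 : ((0.9919198:ℝ) ≤ Real.cos (29.110 * π / 720) ∧ Real.cos (29.110 * π / 720) ≤ 0.9919470) := by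
    have hb := cos_base (t := 29.110 * π / 720) (tl := 29.110 * 3.141592 / 720) (tu := 29.110 * 3.141593 / 720) (by norm_num) (by nlinarith [Real.pi_gt_d6]) (by nlinarith [Real.pi_lt_d6]) (by norm_num)
    exact ⟨le_trans (by norm_num) hb.1, le_trans hb.2 (by norm_num)⟩
  have g0 := cos_double 0.9919198 _ (by norm_num) h0.1 h0.2
  have h1 : ((0.9678097:ℝ) ≤ Real.cos (2*(29.110 * π / 720)) ∧ Real.cos (2*(29.110 * π / 720)) ≤ 0.9679178) := ⟨le_trans (by norm_num) g0.1, le_trans g0.2 (by norm_num)⟩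
  have g1 := cos_double 0.9678097 _ (by norm_num) h1.1 h1.2
  have h2 : ((0.8733112:ℝ) ≤ Real.cos (2*(2*(29.110 * π / 720))) ∧ Real.cos (2*(2*(29.110 * π / 720))) ≤ 0.8737298) := ⟨le_trans (by norm_num) g1.1, le_trans g1.2 (by norm_num)⟩
  rw [e]; exact h2

private lemma cos_a4 : (0.9402624:ℝ) ≤ Real.cos (19.890 * π / 180) ∧ Real.cos (19.890 * π / 180) ≤ 0.9403586 := by
  have e : (19.890:ℝ) * π / 180 = 2*(2*(19.890 * π / 720)) := by ring
  have h0 : ((0.9962310:ℝ) ≤ Real.cos (19.890 * π / 720) ∧ Real.cos (19.890 * π / 720) ≤ 0.9962371) := by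
    have hb := cos_base (t := 19.890 * π / 720) (tl := 19.890 * 3.141592 / 720) (tu := 19.890 * 3.141593 / 720) (by norm_num) (by nlinarith [Real.pi_gt_d6]) (by nlinarith [Real.pi_lt_d6]) (by norm_num)
    exact ⟨le_trans (by norm_num) hb.1, le_trans hb.2 (by norm_num)⟩
  have g0 := cos_double 0.9962310 _ (by norm_num) h0.1 h0.2
  have h1 : ((0.9849524:ℝ) ≤ Real.cos (2*(19.890 * π / 720)) ∧ Real.cos (2*(19.890 * π / 720)) ≤ 0.9849768) := ⟨le_trans (by norm_num) g0.1, le_trans g0.2 (by norm_num)⟩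
  have g1 := cos_double 0.9849524 _ (by norm_num) h1.1 h1.2
  have h2 : ((0.9402624:ℝ) ≤ Real.cos (2*(2*(19.890 * π / 720))) ∧ Real.cos (2*(2*(19.890 * π / 720))) ≤ 0.9403586) := ⟨le_trans (by norm_num) g1.1, le_trans g1.2 (by norm_num)⟩
  rw [e]; exact h2

private lemma cos_a5 : (0.9735579:ℝ) ≤ Real.cos (13.201 * π / 180) ∧ Real.cos (13.201 * π / 180) ≤ 0.9735771 := by
  have e : (13.201:ℝ) * π / 180 = 2*(2*(13.201 * π / 720)) := by ring
  have h0 : ((0.9983405:ℝ) ≤ Real.cos (13.201 * π / 720) ∧ Real.cos (13.201 * π / 720) ≤ 0.9983417) := by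
    have hb := cos_base (t := 13.201 * π / 720) (tl := 13.201 * 3.141592 / 720) (tu := 13.201 * 3.141593 / 720) (by norm_num) (by nlinarith [Real.pi_gt_d6]) (by nlinarith [Real.pi_lt_d6]) (by norm_num)
    exact ⟨le_trans (by norm_num) hb.1, le_trans hb.2 (by norm_num)⟩
  have g0 := cos_double 0.9983405 _ (by norm_num) h0.1 h0.2
  have h1 : ((0.9933675:ℝ) ≤ Real.cos (2*(13.201 * π / 720)) ∧ Real.cos (2*(13.201 * π / 720)) ≤ 0.9933723) := ⟨le_trans (by norm_num) g0.1, le_trans g0.2 (by norm_num)⟩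
  have g1 := cos_double 0.9933675 _ (by norm_num) h1.1 h1.2
  have h2 : ((0.9735579:ℝ) ≤ Real.cos (2*(2*(13.201 * π / 720))) ∧ Real.cos (2*(2*(13.201 * π / 720))) ≤ 0.9735771) := ⟨le_trans (by norm_num) g1.1, le_trans g1.2 (by norm_num)⟩
  rw [e]; exact h2

private lemma cos_s2 : (-0.2607163:ℝ) ≤ Real.cos (104.599 * π / 180) ∧ Real.cos (104.599 * π / 180) ≤ -0.2510747 := by
  have e : (104.599:ℝ) * π / 180 = 2*(2*(2*(104.599 * π / 1440))) := by ring
  have h0 : ((0.9738212:ℝ) ≤ Real.cos (104.599 * π / 1440) ∧ Real.cos (104.599 * π / 1440) ≤ 0.9741038) := by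
    have hb := cos_base (t := 104.599 * π / 1440) (tl := 104.599 * 3.141592 / 1440) (tu := 104.599 * 3.141593 / 1440) (by norm_num) (by nlinarith [Real.pi_gt_d6]) (by nlinarith [Real.pi_lt_d6]) (by norm_num)
    exact ⟨le_trans (by norm_num) hb.1, le_trans hb.2 (by norm_num)⟩
  have g0 := cos_double 0.9738212 _ (by norm_num) h0.1 h0.2
  have h1 : ((0.8966554:ℝ) ≤ Real.cos (2*(104.599 * π / 1440)) ∧ Real.cos (2*(104.599 * π / 1440)) ≤ 0.8977565) := ⟨le_trans (by norm_num) g0.1, le_trans g0.2 (by norm_num)⟩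
  have g1 := cos_double 0.8966554 _ (by norm_num) h1.1 h1.2
  have h2 : ((0.6079818:ℝ) ≤ Real.cos (2*(2*(104.599 * π / 1440))) ∧ Real.cos (2*(2*(104.599 * π / 1440))) ≤ 0.6119335) := ⟨le_trans (by norm_num) g1.1, le_trans g1.2 (by norm_num)⟩
  have g2 := cos_double 0.6079818 _ (by norm_num) h2.1 h2.2
  have h3 : ((-0.2607163:ℝ) ≤ Real.cos (2*(2*(2*(104.599 * π / 1440)))) ∧ Real.cos (2*(2*(2*(104.599 * π / 1440)))) ≤ -0.2510747) := ⟨le_trans (by norm_num) g2.1, le_trans g2.2 (by norm_num)⟩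
  rw [e]; exact h3

private lemma cos_s3 : (-0.7044544:ℝ) ≤ Real.cos (133.709 * π / 180) ∧ Real.cos (133.709 * π / 180) ≤ -0.6894577 := by
  have e : (133.709:ℝ) * π / 180 = 2*(2*(2*(133.709 * π / 1440))) := by ring
  have h0 : ((0.9570761:ℝ) ≤ Real.cos (133.709 * π / 1440) ∧ Real.cos (133.709 * π / 1440) ≤ 0.9578305) := by
    have hb := cos_base (t := 133.709 * π / 1440) (tl := 133.709 * 3.141592 / 1440) (tu := 133.709 * 3.141593 / 1440) (by norm_num) (by nlinarith [Real.pi_gt_d6]) (by nlinarith [Real.pi_lt_d6]) (by norm_num)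
    exact ⟨le_trans (by norm_num) hb.1, le_trans hb.2 (by norm_num)⟩
  have g0 := cos_double 0.9570761 _ (by norm_num) h0.1 h0.2
  have h1 : ((0.8319893:ℝ) ≤ Real.cos (2*(133.709 * π / 1440)) ∧ Real.cos (2*(133.709 * π / 1440)) ≤ 0.8348786) := ⟨le_trans (by norm_num) g0.1, le_trans g0.2 (by norm_num)⟩
  have g1 := cos_double 0.8319893 _ (by norm_num) h1.1 h1.2
  have h2 : ((0.3844123:ℝ) ≤ Real.cos (2*(2*(133.709 * π / 1440))) ∧ Real.cos (2*(2*(133.709 * π / 1440))) ≤ 0.3940446) := ⟨le_trans (by norm_num) g1.1, le_trans g1.2 (by norm_num)⟩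
  have g2 := cos_double 0.3844123 _ (by norm_num) h2.1 h2.2
  have h3 : ((-0.7044544:ℝ) ≤ Real.cos (2*(2*(2*(133.709 * π / 1440)))) ∧ Real.cos (2*(2*(2*(133.709 * π / 1440)))) ≤ -0.6894577) := ⟨le_trans (by norm_num) g2.1, le_trans g2.2 (by norm_num)⟩
  rw [e]; exact h3

private lemma cos_s4 : (-0.9080386:ℝ) ≤ Real.cos (153.599 * π / 180) ∧ Real.cos (153.599 * π / 180) ≤ -0.8942551 := by
  have e : (153.599:ℝ) * π / 180 = 2*(2*(2*(153.599 * π / 1440))) := by ring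
  have h0 : ((0.9431968:ℝ) ≤ Real.cos (153.599 * π / 1440) ∧ Real.cos (153.599 * π / 1440) ≤ 0.9445105) := by
    have hb := cos_base (t := 153.599 * π / 1440) (tl := 153.599 * 3.141592 / 1440) (tu := 153.599 * 3.141593 / 1440) (by norm_num) (by nlinarith [Real.pi_gt_d6]) (by nlinarith [Real.pi_lt_d6]) (by norm_num)
    exact ⟨le_trans (by norm_num) hb.1, le_trans hb.2 (by norm_num)⟩
  have g0 := cos_double 0.9431968 _ (by norm_num) h0.1 h0.2
  have h1 : ((0.7792404:ℝ) ≤ Real.cos (2*(153.599 * π / 1440)) ∧ Real.cos (2*(153.599 * π / 1440)) ≤ 0.7842002) := ⟨le_trans (by norm_num) g0.1, le_trans g0.2 (by norm_num)⟩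
  have g1 := cos_double 0.7792404 _ (by norm_num) h1.1 h1.2
  have h2 : ((0.2144312:ℝ) ≤ Real.cos (2*(2*(153.599 * π / 1440))) ∧ Real.cos (2*(2*(153.599 * π / 1440))) ≤ 0.2299400) := ⟨le_trans (by norm_num) g1.1, le_trans g1.2 (by norm_num)⟩
  have g2 := cos_double 0.2144312 _ (by norm_num) h2.1 h2.2
  have h3 : ((-0.9080386:ℝ) ≤ Real.cos (2*(2*(2*(153.599 * π / 1440)))) ∧ Real.cos (2*(2*(2*(153.599 * π / 1440)))) ≤ -0.8942551) := ⟨le_trans (by norm_num) g2.1, le_trans g2.2 (by norm_num)⟩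
  rw [e]; exact h3

private lemma cos_s5 : (-0.9812944:ℝ) ≤ Real.cos (166.8 * π / 180) ∧ Real.cos (166.8 * π / 180) ≤ -0.9726150 := by
  have e : (166.8:ℝ) * π / 180 = 2*(2*(2*(166.8 * π / 1440))) := by ring
  have h0 : ((0.9328746:ℝ) ≤ Real.cos (166.8 * π / 1440) ∧ Real.cos (166.8 * π / 1440) ≤ 0.9347014) := by
    have hb := cos_base (t := 166.8 * π / 1440) (tl := 166.8 * 3.141592 / 1440) (tu := 166.8 * 3.141593 / 1440) (by norm_num) (by nlinarith [Real.pi_gt_d6]) (by nlinarith [Real.pi_lt_d6]) (by norm_num)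
    exact ⟨le_trans (by norm_num) hb.1, le_trans hb.2 (by norm_num)⟩
  have g0 := cos_double 0.9328746 _ (by norm_num) h0.1 h0.2
  have h1 : ((0.7405100:ℝ) ≤ Real.cos (2*(166.8 * π / 1440)) ∧ Real.cos (2*(166.8 * π / 1440)) ≤ 0.7473335) := ⟨le_trans (by norm_num) g0.1, le_trans g0.2 (by norm_num)⟩
  have g1 := cos_double 0.7405100 _ (by norm_num) h1.1 h1.2
  have h2 : ((0.0967101:ℝ) ≤ Real.cos (2*(2*(166.8 * π / 1440))) ∧ Real.cos (2*(2*(166.8 * π / 1440))) ≤ 0.1170148) := ⟨le_trans (by norm_num) g1.1, le_trans g1.2 (by norm_num)⟩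
  have g2 := cos_double 0.0967101 _ (by norm_num) h2.1 h2.2
  have h3 : ((-0.9812944:ℝ) ≤ Real.cos (2*(2*(2*(166.8 * π / 1440)))) ∧ Real.cos (2*(2*(2*(166.8 * π / 1440)))) ≤ -0.9726150) := ⟨le_trans (by norm_num) g2.1, le_trans g2.2 (by norm_num)⟩
  rw [e]; exact h3

set_option maxHeartbeats 1000000 in
/-- For the angles of Table 1, line 6 (in degrees), the 11-vertex planar double Conway
spiral 0-skeleton has `z_C(α) = (1 + 2 ∑_{i=1}^5 (∏ cos α_j) cos(∑ α_j)) / 11 < 0`. -/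
theorem planar_11gon_zC_neg :
    let α : ℕ → ℝ := fun i =>
      if i = 1 then 62.427 * π / 180
      else if i = 2 then 42.172 * π / 180
      else if i = 3 then 29.110 * π / 180
      else if i = 4 then 19.890 * π / 180
      else if i = 5 then 13.201 * π / 180
      else 0
    (1 + 2 * ∑ i ∈ Finset.Icc 1 5,
      (∏ j ∈ Finset.Icc 1 i, Real.cos (α j)) * Real.cos (∑ j ∈ Finset.Icc 1 i, α j)) / 11
      < 0 := by
  intro α
  rw [show (Finset.Icc 1 5 : Finset ℕ) = {1,2,3,4,5} by rfl]
  rw [Finset.sum_insert (by decide), Finset.sum_insert (by decide), Finset.sum_insert (by decide),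
      Finset.sum_insert (by decide), Finset.sum_singleton]
  rw [show (Finset.Icc 1 1 : Finset ℕ) = {1} by rfl, show (Finset.Icc 1 2 : Finset ℕ) = {1,2} by rfl,
      show (Finset.Icc 1 3 : Finset ℕ) = {1,2,3} by rfl, show (Finset.Icc 1 4 : Finset ℕ) = {1,2,3,4} by rfl,
      show (Finset.Icc 1 5 : Finset ℕ) = {1,2,3,4,5} by rfl]
  simp only [Finset.sum_insert, Finset.prod_insert, Finset.sum_singleton, Finset.mem_insert, Finset.mem_singleton,
    Finset.prod_singleton, α]
  norm_num
  rw [show ((62427:ℝ)/1000 * π / 180 + 10543/250 * π / 180) = 104.599 * π / 180 by ring,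
      show ((62427:ℝ)/1000 * π / 180 + (10543/250 * π / 180 + 2911/100 * π / 180)) = 133.709 * π / 180 by ring,
      show ((62427:ℝ)/1000 * π / 180 + (10543/250 * π / 180 + (2911/100 * π / 180 + 1989/100 * π / 180))) = 153.599 * π / 180 by ring,
      show ((62427:ℝ)/1000 * π / 180 + (10543/250 * π / 180 + (2911/100 * π / 180 + (1989/100 * π / 180 + 13201/1000 * π / 180)))) = 166.8 * π / 180 by ring,
      show ((62427:ℝ)/1000) = 62.427 by norm_num, show ((10543:ℝ)/250) = 42.172 by norm_num,
      show ((2911:ℝ)/100) = 29.110 by norm_num, show ((1989:ℝ)/100) = 19.890 by norm_num,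
      show ((13201:ℝ)/1000) = 13.201 by norm_num]
  set c1 := Real.cos (62.427 * π / 180) with hc1
  set c2 := Real.cos (42.172 * π / 180) with hc2
  set c3 := Real.cos (29.110 * π / 180) with hc3
  set c4 := Real.cos (19.890 * π / 180) with hc4
  set c5 := Real.cos (13.201 * π / 180) with hc5
  set s2 := Real.cos (104.599 * π / 180) with hs2
  set s3 := Real.cos (133.709 * π / 180) with hs3
  set s4 := Real.cos (153.599 * π / 180) with hs4
  set s5 := Real.cos (166.8 * π / 180) with hs5
  clear_value c1 c2 c3 c4 c5 s2 s3 s4 s5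
  have b1 := cos_a1; have b2 := cos_a2; have b3 := cos_a3; have b4 := cos_a4; have b5 := cos_a5
  have d2 := cos_s2; have d3 := cos_s3; have d4 := cos_s4; have d5 := cos_s5
  rw [← hc1] at b1; rw [← hc2] at b2; rw [← hc3] at b3; rw [← hc4] at b4; rw [← hc5] at b5
  rw [← hs2] at d2; rw [← hs3] at d3; rw [← hs4] at d4; rw [← hs5] at d5
  have t1 : c1 * c1 ≤ 0.2149653 :=
    le_trans (mul_le_mul b1.2 b1.2 (le_trans (by norm_num) b1.1) (by norm_num)) (by norm_num)
  have p2 : (0.3373060:ℝ) ≤ c1 * c2 :=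
    le_trans (by norm_num) (mul_le_mul b1.1 b2.1 (by norm_num) (le_trans (by norm_num) b1.1))
  have p3 : (0.2945731:ℝ) ≤ c1 * c2 * c3 :=
    le_trans (by norm_num) (mul_le_mul p2 b3.1 (by norm_num) (le_trans (by norm_num) p2))
  have p4 : (0.2769760:ℝ) ≤ c1 * c2 * c3 * c4 :=
    le_trans (by norm_num) (mul_le_mul p3 b4.1 (by norm_num) (le_trans (by norm_num) p3))
  have p5 : (0.2696521:ℝ) ≤ c1 * c2 * c3 * c4 * c5 :=
    le_trans (by norm_num) (mul_le_mul p4 b5.1 (by norm_num) (le_trans (by norm_num) p4))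
  have t2 : c1 * c2 * s2 ≤ -0.0846890 := by
    have h1 : c1 * c2 * s2 ≤ 0.3373060 * s2 :=
      mul_le_mul_of_nonpos_right p2 (le_trans d2.2 (by norm_num))
    have h2 : (0.3373060:ℝ) * s2 ≤ 0.3373060 * (-0.2510747) :=
      mul_le_mul_of_nonneg_left d2.2 (by norm_num)
    have := h1.trans h2; linarith
  have t3 : c1 * (c2 * c3) * s3 ≤ -0.2030956 := by
    have hp : (0.2945731:ℝ) ≤ c1 * (c2 * c3) := by rw [← mul_assoc]; exact p3
    have h1 : c1 * (c2 * c3) * s3 ≤ 0.2945731 * s3 :=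
      mul_le_mul_of_nonpos_right hp (le_trans d3.2 (by norm_num))
    have h2 : (0.2945731:ℝ) * s3 ≤ 0.2945731 * (-0.6894577) :=
      mul_le_mul_of_nonneg_left d3.2 (by norm_num)
    have := h1.trans h2; linarith
  have t4 : c1 * (c2 * (c3 * c4)) * s4 ≤ -0.2476872 := by
    have hp : (0.2769760:ℝ) ≤ c1 * (c2 * (c3 * c4)) := by rw [← mul_assoc, ← mul_assoc]; exact p4
    have h1 : c1 * (c2 * (c3 * c4)) * s4 ≤ 0.2769760 * s4 :=
      mul_le_mul_of_nonpos_right hp (le_trans d4.2 (by norm_num))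
    have h2 : (0.2769760:ℝ) * s4 ≤ 0.2769760 * (-0.8942551) :=
      mul_le_mul_of_nonneg_left d4.2 (by norm_num)
    have := h1.trans h2; linarith
  have t5 : c1 * (c2 * (c3 * (c4 * c5))) * s5 ≤ -0.2622676 := by
    have hp : (0.2696521:ℝ) ≤ c1 * (c2 * (c3 * (c4 * c5))) := by
      rw [← mul_assoc, ← mul_assoc, ← mul_assoc]; exact p5
    have h1 : c1 * (c2 * (c3 * (c4 * c5))) * s5 ≤ 0.2696521 * s5 :=
      mul_le_mul_of_nonpos_right hp (le_trans d5.2 (by norm_num))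
    have h2 : (0.2696521:ℝ) * s5 ≤ 0.2696521 * (-0.9726150) :=
      mul_le_mul_of_nonneg_left d5.2 (by norm_num)
    have := h1.trans h2; linarith
  linarith [t1, t2, t3, t4, t5]
end

section
/- Define z*_C(α) = (1 + k·(S_n(α) + (1/k) sin²α_1 tan²(π/k)))/(1 + kn), with S_n(α) = ∑_{i=1}^n (∏_{j=1}^i cos α_j)·cos(∑_{j=1}^i α_j). For n = 3, k = 8 and α = (72.912°, 46.543°, 30.273°) one has z*_C(α) < 0. -/
open Real Finset

private lemma pi_lb' : (3.141592 : ℝ) ≤ π := le_of_lt Real.pi_gt_d6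
private lemma pi_ub' : π ≤ (3.141593 : ℝ) := le_of_lt Real.pi_lt_d6

private lemma sin_le_num {x a b t : ℝ} (ha : a ≤ x) (hb : x ≤ b) (h0 : 0 ≤ a) (h1 : b ≤ 1)
    (ht : b - a ^ 3 / 6 + b ^ 4 * (5 / 96) ≤ t) : Real.sin x ≤ t := by
  have hx0 : 0 ≤ x := le_trans h0 ha
  have hB := Real.sin_bound (x := x) (by rw [abs_of_nonneg hx0]; linarith)
  rw [abs_of_nonneg hx0] at hB
  have h := abs_le.1 hB
  have h3 : a ^ 3 ≤ x ^ 3 := pow_le_pow_left₀ h0 ha 3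
  have h4 : x ^ 4 ≤ b ^ 4 := pow_le_pow_left₀ hx0 hb 4
  nlinarith [h.1, h.2, mul_le_mul_of_nonneg_left (show x ≤ 1 by linarith) (pow_nonneg hx0 4)]

private lemma num_le_sin {x a b t : ℝ} (ha : a ≤ x) (hb : x ≤ b) (h0 : 0 ≤ a) (h1 : b ≤ 1)
    (ht : t ≤ a - b ^ 3 / 6 - b ^ 4 * (5 / 96)) : t ≤ Real.sin x := by
  have hx0 : 0 ≤ x := le_trans h0 ha
  have hB := Real.sin_bound (x := x) (by rw [abs_of_nonneg hx0]; linarith)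
  rw [abs_of_nonneg hx0] at hB
  have h := abs_le.1 hB
  have h3 : x ^ 3 ≤ b ^ 3 := pow_le_pow_left₀ hx0 hb 3
  have h4 : x ^ 4 ≤ b ^ 4 := pow_le_pow_left₀ hx0 hb 4
  nlinarith [h.1, h.2, mul_le_mul_of_nonneg_left (show x ≤ 1 by linarith) (pow_nonneg hx0 4)]

private lemma cos_le_num {x a b t : ℝ} (ha : a ≤ x) (hb : x ≤ b) (h0 : 0 ≤ a) (h1 : b ≤ 1)
    (ht : 1 - a ^ 2 / 2 + b ^ 4 * (5 / 96) ≤ t) : Real.cos x ≤ t := by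
  have hx0 : 0 ≤ x := le_trans h0 ha
  have hB := Real.cos_bound (x := x) (by rw [abs_of_nonneg hx0]; linarith)
  rw [abs_of_nonneg hx0] at hB
  have h := abs_le.1 hB
  have h2 : a ^ 2 ≤ x ^ 2 := pow_le_pow_left₀ h0 ha 2
  have h4 : x ^ 4 ≤ b ^ 4 := pow_le_pow_left₀ hx0 hb 4
  nlinarith [h.1, h.2]

private lemma num_le_cos {x a b t : ℝ} (ha : a ≤ x) (hb : x ≤ b) (h0 : 0 ≤ a) (h1 : b ≤ 1)
    (ht : t ≤ 1 - b ^ 2 / 2 - b ^ 4 * (5 / 96)) : t ≤ Real.cos x := by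
  have hx0 : 0 ≤ x := le_trans h0 ha
  have hB := Real.cos_bound (x := x) (by rw [abs_of_nonneg hx0]; linarith)
  rw [abs_of_nonneg hx0] at hB
  have h := abs_le.1 hB
  have h2 : x ^ 2 ≤ b ^ 2 := pow_le_pow_left₀ hx0 hb 2
  have h4 : x ^ 4 ≤ b ^ 4 := pow_le_pow_left₀ hx0 hb 4
  nlinarith [h.1, h.2]

private lemma tan_pi_div_eight_sq : Real.tan (π / 8) ^ 2 ≤ 0.1716 := by
  have h2 : Real.sqrt 2 ^ 2 = 2 := Real.sq_sqrt (by norm_num)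
  have h2n : (0:ℝ) ≤ Real.sqrt 2 := Real.sqrt_nonneg 2
  have h2l : (1.414:ℝ) ≤ Real.sqrt 2 := by nlinarith
  have h2u : Real.sqrt 2 ≤ 1.415 := by nlinarith
  rw [Real.tan_eq_sin_div_cos, div_pow, Real.sin_pi_div_eight, Real.cos_pi_div_eight,
    div_pow, div_pow, Real.sq_sqrt (by nlinarith), Real.sq_sqrt (by nlinarith)]
  rw [div_le_iff₀ (show (0:ℝ) < (2 + Real.sqrt 2) / 2 ^ 2 by positivity)]
  nlinarith

set_option maxHeartbeats 2000000 in
/-- For `n = 3`, `k = 8` and the angles of Table 1, line 2 (in degrees), the corrected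
center-of-mass height `z*_C(α)` is negative. -/
theorem spiral25_zC_neg :
    let α : ℕ → ℝ := fun i =>
      if i = 1 then 72.912 * π / 180
      else if i = 2 then 46.543 * π / 180
      else if i = 3 then 30.273 * π / 180
      else 0
    let S : ℝ := ∑ i ∈ Finset.Icc 1 3,
      (∏ j ∈ Finset.Icc 1 i, Real.cos (α j)) * Real.cos (∑ j ∈ Finset.Icc 1 i, α j)
    (1 + 8 * (S + (1 / 8) * Real.sin (α 1) ^ 2 * Real.tan (π / 8) ^ 2)) / (1 + 8 * 3)
      < 0 := by
  intro α S
  have hα1 : α 1 = 72.912 * π / 180 := rfl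
  have hα2 : α 2 = 46.543 * π / 180 := rfl
  have hα3 : α 3 = 30.273 * π / 180 := rfl
  have hS : S = Real.cos (α 1) * Real.cos (α 1)
      + Real.cos (α 1) * Real.cos (α 2) * Real.cos (α 1 + α 2)
      + Real.cos (α 1) * Real.cos (α 2) * Real.cos (α 3) * Real.cos (α 1 + α 2 + α 3) := by
    show (∑ i ∈ Finset.Icc 1 3,
      (∏ j ∈ Finset.Icc 1 i, Real.cos (α j)) * Real.cos (∑ j ∈ Finset.Icc 1 i, α j)) = _
    simp [show Finset.Icc 1 3 = ({1, 2, 3} : Finset ℕ) from rfl,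
      show Finset.Icc 1 1 = ({1} : Finset ℕ) from rfl,
      show Finset.Icc 1 2 = ({1, 2} : Finset ℕ) from rfl,
      Finset.sum_insert, Finset.prod_insert]
    ring
  -- rewrite the trig arguments into [0,1]
  have e1 : Real.cos (α 1) = Real.sin (17.088 * π / 180) := by
    rw [hα1, show 72.912 * π / 180 = π / 2 - 17.088 * π / 180 by ring, Real.cos_pi_div_two_sub]
  have e1' : Real.sin (α 1) = Real.cos (17.088 * π / 180) := by
    rw [hα1, show 72.912 * π / 180 = π / 2 - 17.088 * π / 180 by ring, Real.sin_pi_div_two_sub]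
  have e12 : Real.cos (α 1 + α 2) = -Real.sin (29.455 * π / 180) := by
    rw [hα1, hα2, show 72.912 * π / 180 + 46.543 * π / 180 = 29.455 * π / 180 + π / 2 by ring,
      Real.cos_add_pi_div_two]
  have e123 : Real.cos (α 1 + α 2 + α 3) = -Real.cos (30.272 * π / 180) := by
    rw [hα1, hα2, hα3,
      show 72.912 * π / 180 + 46.543 * π / 180 + 30.273 * π / 180 = π - 30.272 * π / 180 by ring,
      Real.cos_pi_sub]
  -- interval bounds for the arguments
  have pl := pi_lb'
  have pu := pi_ub'
  have by1a : (0.298241 : ℝ) ≤ 17.088 * π / 180 := by nlinarith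
  have by1b : 17.088 * π / 180 ≤ (0.298242 : ℝ) := by nlinarith
  have ba2a : (0.812328 : ℝ) ≤ 46.543 * π / 180 := by nlinarith
  have ba2b : 46.543 * π / 180 ≤ (0.812329 : ℝ) := by nlinarith
  have ba3a : (0.528363 : ℝ) ≤ 30.273 * π / 180 := by nlinarith
  have ba3b : 30.273 * π / 180 ≤ (0.528364 : ℝ) := by nlinarith
  have by12a : (0.514086 : ℝ) ≤ 29.455 * π / 180 := by nlinarith
  have by12b : 29.455 * π / 180 ≤ (0.514087 : ℝ) := by nlinarith
  have by123a : (0.528345 : ℝ) ≤ 30.272 * π / 180 := by nlinarith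
  have by123b : 30.272 * π / 180 ≤ (0.528347 : ℝ) := by nlinarith
  -- numeric bounds on the trig values
  have hc1u : Real.sin (17.088 * π / 180) ≤ 0.294233 :=
    sin_le_num by1a by1b (by norm_num) (by norm_num) (by norm_num)
  have hc1l : (0.293407 : ℝ) ≤ Real.sin (17.088 * π / 180) :=
    num_le_sin by1a by1b (by norm_num) (by norm_num) (by norm_num)
  have hs1u : Real.cos (17.088 * π / 180) ≤ 0.955939 :=
    cos_le_num by1a by1b (by norm_num) (by norm_num) (by norm_num)
  have hs1l : (0 : ℝ) ≤ Real.cos (17.088 * π / 180) :=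
    num_le_cos by1a by1b (by norm_num) (by norm_num) (by norm_num)
  have hc2u : Real.cos (46.543 * π / 180) ≤ 0.692741 :=
    cos_le_num ba2a ba2b (by norm_num) (by norm_num) (by norm_num)
  have hc2l : (0.647381 : ℝ) ≤ Real.cos (46.543 * π / 180) :=
    num_le_cos ba2a ba2b (by norm_num) (by norm_num) (by norm_num)
  have hc3l : (0.856356 : ℝ) ≤ Real.cos (30.273 * π / 180) :=
    num_le_cos ba3a ba3b (by norm_num) (by norm_num) (by norm_num)
  have hs12l : (0.487803 : ℝ) ≤ Real.sin (29.455 * π / 180) :=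
    num_le_sin by12a by12b (by norm_num) (by norm_num) (by norm_num)
  have hc123l : (0.856366 : ℝ) ≤ Real.cos (30.272 * π / 180) :=
    num_le_cos by123a by123b (by norm_num) (by norm_num) (by norm_num)
  -- assemble
  have ht1 : Real.cos (α 1) * Real.cos (α 1) ≤ 0.294233 ^ 2 := by
    rw [e1]; nlinarith
  have hp2 : (0.293407 : ℝ) * 0.647381 * 0.487803
      ≤ Real.cos (α 1) * Real.cos (α 2) * Real.sin (29.455 * π / 180) := by
    rw [e1, hα2]
    gcongr
  have hp3 : (0.293407 : ℝ) * 0.647381 * 0.856356 * 0.856366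
      ≤ Real.cos (α 1) * Real.cos (α 2) * Real.cos (α 3) * Real.cos (30.272 * π / 180) := by
    rw [e1, hα2, hα3]
    gcongr
  have hsin2 : Real.sin (α 1) ^ 2 ≤ 0.955939 ^ 2 := by
    rw [e1']; nlinarith
  have htansin : Real.sin (α 1) ^ 2 * Real.tan (π / 8) ^ 2 ≤ 0.955939 ^ 2 * 0.1716 := by
    have := tan_pi_div_eight_sq
    have h1 : (0:ℝ) ≤ Real.sin (α 1) ^ 2 := sq_nonneg _
    have h2 : (0:ℝ) ≤ Real.tan (π / 8) ^ 2 := sq_nonneg _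
    nlinarith
  have hSub : S ≤ 0.294233 ^ 2 - 0.293407 * 0.647381 * 0.487803
      - 0.293407 * 0.647381 * 0.856356 * 0.856366 := by
    rw [hS, e12, e123]; nlinarith
  rw [div_neg_iff]
  right
  refine ⟨by nlinarith [htansin, hSub], by norm_num⟩
end
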